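/- The Wasserstein-1 distance between two probability distributions on ℝ with finite first moments equals the integral of the absolute difference of their cumulative distribution functions: W₁(μ, ν) = ∫_ℝ |F_μ(t) − F_ν(t)| dt. -/

import Mathlib

open MeasureTheory

/-- The Wasserstein-1 distance between Borel probability measures on `ℝ`:
the infimum over couplings `γ` (measures on `ℝ × ℝ` with marginals `μ` and `ν`)
of `∫ |x − y| dγ`. -/
noncomputable def W1 (μ ν : Measure ℝ) : ℝ :=
  sInf {c : ℝ | ∃ γ : Measure (ℝ × ℝ),
    γ.map Prod.fst = μ ∧ γ.map Prod.snd = ν ∧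
    c = ∫ p, |p.1 - p.2| ∂γ}

/-!
For any coupling `γ`, Tonelli's theorem applied to `|x - y| = λ(Ici x ∆ Ici y)` gives
`∫ |x - y| dγ = ∫ γ({x ≤ t} ∆ {y ≤ t}) dt ≥ ∫ |F_μ(t) - F_ν(t)| dt`.
The inequality is an equality as soon as the sublevel sets `{x ≤ t}` and `{y ≤ t}` are nested
for every `t`, which is the case for the quantile coupling, the image of Lebesgue measure on
`(0, 1)` under `u ↦ (F_μ⁻¹(u), F_ν⁻¹(u))`. The first moments make the cost of every coupling
integrable, so that its Bochner integral is not the junk value `0`.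
-/

open Set ProbabilityTheory Filter Topology
open scoped ENNReal symmDiff

theorem volume_Ici_symmDiff_Ici (x y : ℝ) :
    volume (Ici x ∆ Ici y) = ENNReal.ofReal |x - y| := by
  wlog hxy : x ≤ y generalizing x y
  · rw [symmDiff_comm, abs_sub_comm]
    exact this y x (le_of_not_ge hxy)
  rw [symmDiff_of_ge (Ici_subset_Ici.2 hxy), Ici_sdiff_Ici, Real.volume_Ico, abs_sub_comm,
    abs_of_nonneg (sub_nonneg.2 hxy)]

section LayerCake

variable {α : Type*} [MeasurableSpace α] (P : Measure α)

theorem integral_abs_sub_eq_toReal_lintegral {f g : α → ℝ} (hf : Measurable f)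
    (hg : Measurable g) :
    ∫ a, |f a - g a| ∂P = (∫⁻ a, ENNReal.ofReal |f a - g a| ∂P).toReal :=
  integral_eq_lintegral_of_nonneg_ae (ae_of_all _ fun _ => abs_nonneg _)
    (hf.sub hg).abs.aestronglyMeasurable

theorem lintegral_ofReal_abs_sub_eq_lintegral_measure_symmDiff [SFinite P] {f g : α → ℝ}
    (hf : Measurable f) (hg : Measurable g) :
    ∫⁻ a, ENNReal.ofReal |f a - g a| ∂P = ∫⁻ t, P ({a | f a ≤ t} ∆ {a | g a ≤ t}) := by
  set S : Set (α × ℝ) := {q | f q.1 ≤ q.2} ∆ {q | g q.1 ≤ q.2}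
  have hS : MeasurableSet S :=
    (measurableSet_le (hf.comp measurable_fst) measurable_snd).symmDiff
      (measurableSet_le (hg.comp measurable_fst) measurable_snd)
  calc ∫⁻ a, ENNReal.ofReal |f a - g a| ∂P = ∫⁻ a, volume (Prod.mk a ⁻¹' S) ∂P := by
        simp_rw [← volume_Ici_symmDiff_Ici]; rfl
    _ = P.prod volume S := (Measure.prod_apply hS).symm
    _ = ∫⁻ t, P ({a | f a ≤ t} ∆ {a | g a ≤ t}) := Measure.prod_apply_symm hS

variable [IsFiniteMeasure P]

theorem ofReal_abs_sub_measureReal_le_measure_symmDiff (s t : Set α) :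
    ENNReal.ofReal |P.real s - P.real t| ≤ P (s ∆ t) := by
  wlog h : P.real t ≤ P.real s generalizing s t
  · rw [abs_sub_comm, symmDiff_comm]
    exact this t s (le_of_not_ge h)
  rw [abs_of_nonneg (sub_nonneg.2 h), ENNReal.ofReal_sub _ measureReal_nonneg,
    ofReal_measureReal, ofReal_measureReal]
  exact le_measure_symmDiff

theorem measure_symmDiff_of_subset {s t : Set α} (hs : NullMeasurableSet s P) (hst : s ⊆ t) :
    P (s ∆ t) = ENNReal.ofReal |P.real s - P.real t| := by
  rw [symmDiff_of_le hst, measure_sdiff hst hs (measure_ne_top _ _), abs_sub_comm,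
    abs_of_nonneg (sub_nonneg.2 (measureReal_mono hst)), ENNReal.ofReal_sub _ measureReal_nonneg,
    ofReal_measureReal, ofReal_measureReal]

theorem lintegral_ofReal_abs_measureReal_sub_le {f g : α → ℝ}
    (hf : Measurable f) (hg : Measurable g) :
    ∫⁻ t, ENNReal.ofReal |P.real {a | f a ≤ t} - P.real {a | g a ≤ t}|
      ≤ ∫⁻ a, ENNReal.ofReal |f a - g a| ∂P := by
  rw [lintegral_ofReal_abs_sub_eq_lintegral_measure_symmDiff P hf hg]
  exact lintegral_mono fun t => ofReal_abs_sub_measureReal_le_measure_symmDiff P _ _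

theorem lintegral_ofReal_abs_sub_eq_of_nested {f g : α → ℝ}
    (hf : Measurable f) (hg : Measurable g)
    (hnest : ∀ t, {a | f a ≤ t} ⊆ {a | g a ≤ t} ∨ {a | g a ≤ t} ⊆ {a | f a ≤ t}) :
    ∫⁻ a, ENNReal.ofReal |f a - g a| ∂P
      = ∫⁻ t, ENNReal.ofReal |P.real {a | f a ≤ t} - P.real {a | g a ≤ t}| := by
  rw [lintegral_ofReal_abs_sub_eq_lintegral_measure_symmDiff P hf hg]
  refine lintegral_congr fun t => ?_
  rcases hnest t with h | h
  · exact measure_symmDiff_of_subset P (measurableSet_le hf measurable_const).nullMeasurableSet h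
  · rw [symmDiff_comm, abs_sub_comm]
    exact measure_symmDiff_of_subset P (measurableSet_le hg measurable_const).nullMeasurableSet h

end LayerCake

theorem measureReal_le_eq_cdf {α : Type*} [MeasurableSpace α] {P : Measure α} {μ : Measure ℝ}
    [IsProbabilityMeasure μ] {f : α → ℝ} (hf : Measurable f) (hfμ : P.map f = μ) (t : ℝ) :
    P.real {a | f a ≤ t} = cdf μ t := by
  rw [cdf_eq_real, ← hfμ, map_measureReal_apply hf measurableSet_Iic]
  rfl

section Quantile

/-- Off `(0, 1)` the infimum is over an empty or unbounded set; the value `0` there is a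
placeholder on a set that Lebesgue measure on `(0, 1)` does not see. -/
noncomputable def quantile (μ : Measure ℝ) (u : ℝ) : ℝ :=
  if u ∈ Ioo 0 1 then sInf {x | u ≤ cdf μ x} else 0

variable (μ : Measure ℝ)

theorem quantile_le_iff {u : ℝ} (hu : u ∈ Ioo 0 1) (t : ℝ) :
    quantile μ u ≤ t ↔ u ≤ cdf μ t := by
  have hne : {x | u ≤ cdf μ x}.Nonempty :=
    ((tendsto_cdf_atTop μ).eventually (eventually_ge_nhds hu.2)).exists
  have hbdd : BddBelow {x | u ≤ cdf μ x} := by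
    obtain ⟨x₀, hx₀⟩ := ((tendsto_cdf_atBot μ).eventually (eventually_lt_nhds hu.1)).exists
    exact ⟨x₀, fun x hx => le_of_not_gt fun hlt => (hx.trans (monotone_cdf μ hlt.le)).not_gt hx₀⟩
  rw [quantile, if_pos hu]
  refine ⟨fun h => ?_, fun h => csInf_le hbdd h⟩
  have hright : ∀ x ∈ Ioi t, u ≤ cdf μ x := fun x hx => by
    obtain ⟨s, hs, hst⟩ := exists_lt_of_csInf_lt hne (h.trans_lt hx)
    exact hs.trans (monotone_cdf μ hst.le)
  exact ge_of_tendsto (((cdf μ).right_continuous t).tendsto.mono_left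
    (nhdsWithin_mono t Ioi_subset_Ici_self)) (eventually_nhdsWithin_of_forall hright)

theorem measurable_quantile : Measurable (quantile μ) := by
  refine measurable_of_Iic fun t => ?_
  have h : quantile μ ⁻¹' Iic t = (Ioo 0 1 ∩ Iic (cdf μ t)) ∪ ((Ioo 0 1)ᶜ ∩ {_u | 0 ≤ t}) := by
    ext u
    by_cases hu : u ∈ Ioo (0 : ℝ) 1
    · simp [quantile_le_iff μ hu t, hu]
    · simp [quantile, hu]
  rw [h]
  exact (measurableSet_Ioo.inter measurableSet_Iic).union
    (measurableSet_Ioo.compl.inter (MeasurableSet.const _))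

theorem map_quantile [IsProbabilityMeasure μ] :
    (volume.restrict (Ioo 0 1)).map (quantile μ) = μ := by
  refine Measure.ext_of_Iic _ _ fun t => ?_
  rw [Measure.map_apply (measurable_quantile μ) measurableSet_Iic,
    Measure.restrict_apply (measurable_quantile μ measurableSet_Iic), ← ofReal_cdf]
  have hlower : Ioo 0 (cdf μ t) ⊆ quantile μ ⁻¹' Iic t ∩ Ioo 0 1 := fun u hu =>
    have hu' : u ∈ Ioo (0 : ℝ) 1 := ⟨hu.1, hu.2.trans_le (cdf_le_one μ t)⟩
    ⟨(quantile_le_iff μ hu' t).2 hu.2.le, hu'⟩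
  have hupper : quantile μ ⁻¹' Iic t ∩ Ioo 0 1 ⊆ Ioc 0 (cdf μ t) := fun u ⟨h, hu⟩ =>
    ⟨hu.1, (quantile_le_iff μ hu t).1 h⟩
  refine le_antisymm ?_ ?_
  · simpa using measure_mono (μ := volume) hupper
  · simpa using measure_mono (μ := volume) hlower

theorem quantile_le_of_cdf_le {ν : Measure ℝ} {u t : ℝ}
    (h : quantile μ u ≤ t) (hcdf : cdf μ t ≤ cdf ν t) : quantile ν u ≤ t := by
  by_cases hu : u ∈ Ioo (0 : ℝ) 1
  · exact (quantile_le_iff ν hu t).2 (((quantile_le_iff μ hu t).1 h).trans hcdf)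
  · simpa [quantile, hu] using h

end Quantile

theorem integrable_abs_sub_of_map {μ ν : Measure ℝ} {γ : Measure (ℝ × ℝ)}
    (hμ : Integrable (fun x => |x|) μ) (hν : Integrable (fun x => |x|) ν)
    (h₁ : γ.map Prod.fst = μ) (h₂ : γ.map Prod.snd = ν) :
    Integrable (fun p : ℝ × ℝ => |p.1 - p.2|) γ := by
  have hfst : Integrable Prod.fst γ :=
    (integrable_map_measure aestronglyMeasurable_id measurable_fst.aemeasurable).1
      (h₁ ▸ (integrable_norm_iff aestronglyMeasurable_id).1 hμ)
  have hsnd : Integrable Prod.snd γ :=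
    (integrable_map_measure aestronglyMeasurable_id measurable_snd.aemeasurable).1
      (h₂ ▸ (integrable_norm_iff aestronglyMeasurable_id).1 hν)
  exact (hfst.sub hsnd).abs

theorem integral_abs_sub_cdf_le_of_map {μ ν : Measure ℝ} [IsProbabilityMeasure μ]
    [IsProbabilityMeasure ν] {γ : Measure (ℝ × ℝ)}
    (h₁ : γ.map Prod.fst = μ) (h₂ : γ.map Prod.snd = ν)
    (hγ : Integrable (fun p : ℝ × ℝ => |p.1 - p.2|) γ) :
    ∫ t, |cdf μ t - cdf ν t| ≤ ∫ p, |p.1 - p.2| ∂γ := by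
  have : IsFiniteMeasure (γ.map Prod.fst) := h₁ ▸ inferInstance
  have : IsFiniteMeasure γ := Measure.isFiniteMeasure_of_map measurable_fst.aemeasurable
  rw [integral_abs_sub_eq_toReal_lintegral volume (monotone_cdf μ).measurable
      (monotone_cdf ν).measurable,
    integral_abs_sub_eq_toReal_lintegral γ measurable_fst measurable_snd]
  refine ENNReal.toReal_mono hγ.lintegral_lt_top.ne ?_
  have h := lintegral_ofReal_abs_measureReal_sub_le γ measurable_fst measurable_snd
  simpa only [measureReal_le_eq_cdf measurable_fst h₁,
    measureReal_le_eq_cdf measurable_snd h₂] using h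

section QuantileCoupling

variable (μ ν : Measure ℝ)

noncomputable def quantileCoupling : Measure (ℝ × ℝ) :=
  (volume.restrict (Ioo 0 1)).map fun u => (quantile μ u, quantile ν u)

theorem measurable_quantile_prod : Measurable fun u => (quantile μ u, quantile ν u) :=
  (measurable_quantile μ).prodMk (measurable_quantile ν)

theorem quantileCoupling_map_fst [IsProbabilityMeasure μ] :
    (quantileCoupling μ ν).map Prod.fst = μ := by
  rw [quantileCoupling, Measure.map_map measurable_fst (measurable_quantile_prod μ ν)]
  exact map_quantile μ

theorem quantileCoupling_map_snd [IsProbabilityMeasure ν] :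
    (quantileCoupling μ ν).map Prod.snd = ν := by
  rw [quantileCoupling, Measure.map_map measurable_snd (measurable_quantile_prod μ ν)]
  exact map_quantile ν

theorem integral_abs_sub_quantileCoupling [IsProbabilityMeasure μ] [IsProbabilityMeasure ν] :
    ∫ p, |p.1 - p.2| ∂quantileCoupling μ ν = ∫ t, |cdf μ t - cdf ν t| := by
  rw [quantileCoupling, integral_map (measurable_quantile_prod μ ν).aemeasurable
      (f := fun p : ℝ × ℝ => |p.1 - p.2|)
      (measurable_fst.sub measurable_snd).abs.aestronglyMeasurable,
    integral_abs_sub_eq_toReal_lintegral _ (measurable_quantile μ) (measurable_quantile ν),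
    integral_abs_sub_eq_toReal_lintegral volume (monotone_cdf μ).measurable
      (monotone_cdf ν).measurable,
    lintegral_ofReal_abs_sub_eq_of_nested _ (measurable_quantile μ) (measurable_quantile ν)]
  · simp only [measureReal_le_eq_cdf (measurable_quantile μ) (map_quantile μ),
      measureReal_le_eq_cdf (measurable_quantile ν) (map_quantile ν)]
  · intro t
    rcases le_total (cdf μ t) (cdf ν t) with h | h
    · exact Or.inl fun u hu => quantile_le_of_cdf_le μ hu h
    · exact Or.inr fun u hu => quantile_le_of_cdf_le ν hu h

end QuantileCoupling

/-- For probability measures on `ℝ` with finite first moments, the Wasserstein-1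
distance equals the `L¹` distance between the cumulative distribution functions:
`W₁(μ, ν) = ∫ |F_μ(t) − F_ν(t)| dt`. -/
theorem w1_eq_integral_cdf_diff (μ ν : Measure ℝ)
    [IsProbabilityMeasure μ] [IsProbabilityMeasure ν]
    (hμ : Integrable (fun x => |x|) μ) (hν : Integrable (fun x => |x|) ν) :
    W1 μ ν = ∫ t, |(μ (Set.Iic t)).toReal - (ν (Set.Iic t)).toReal| := by
  simp_rw [← measureReal_def, ← cdf_eq_real]
  refine IsLeast.csInf_eq ⟨⟨quantileCoupling μ ν, quantileCoupling_map_fst μ ν,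
    quantileCoupling_map_snd μ ν, (integral_abs_sub_quantileCoupling μ ν).symm⟩, ?_⟩
  rintro _ ⟨γ, h₁, h₂, rfl⟩
  exact integral_abs_sub_cdf_le_of_map h₁ h₂ (integrable_abs_sub_of_map hμ hν h₁ h₂)
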